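/- arXiv:2512.00153 — 3 statements merged into one kernel-verified Lean document; each statement's English description precedes it below -/
import Mathlib

section
/- Let f be a maximum (s,t)-flow of G and let e be an edge with f(e) = 1. Then the maximum (s,t)-flow value of G − e equals λ if and only if the residual graph G_f contains a directed cycle passing through the reversed edge e^rev; otherwise the maximum (s,t)-flow value of G − e equals λ − 1. -/
open Finset

/-- A finite directed multigraph on vertex type `V` with edge type `E`:
each edge `e` has a source `src e` and a target `tgt e`. -/
structure Digraph' (V E : Type) where
  src : E → V
  tgt : E → V

namespace Digraph'

variable {V E : Type} [Fintype V] [DecidableEq V] [Fintype E] [DecidableEq E]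

/-- `h : E → ℕ` satisfies flow conservation at every vertex other than `s` and `t`:
the sum over incoming edges equals the sum over outgoing edges. -/
def Conserves (G : Digraph' V E) (s t : V) (h : E → ℕ) : Prop :=
  ∀ v : V, v ≠ s → v ≠ t →
    ∑ e ∈ univ.filter (fun e => G.tgt e = v), h e =
      ∑ e ∈ univ.filter (fun e => G.src e = v), h e

/-- The value of `h`: the net flow out of `s`. -/
def flowValue (G : Digraph' V E) (s : V) (h : E → ℕ) : ℤ :=
  (∑ e ∈ univ.filter (fun e => G.src e = s), (h e : ℤ)) -
    ∑ e ∈ univ.filter (fun e => G.tgt e = s), (h e : ℤ)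

/-- An `(s,t)`-flow of a unit-capacity digraph: a `{0,1}`-valued function on edges
satisfying flow conservation at every vertex other than `s` and `t`. -/
def IsFlow (G : Digraph' V E) (s t : V) (f : E → ℕ) : Prop :=
  (∀ e, f e ≤ 1) ∧ G.Conserves s t f

/-- One step along an edge not belonging to `F`. -/
def stepAvoid (G : Digraph' V E) (F : Finset E) (u v : V) : Prop :=
  ∃ e, e ∉ F ∧ G.src e = u ∧ G.tgt e = v

/-- Reachability by a directed path using no edge of `F`. -/
def ReachAvoid (G : Digraph' V E) (F : Finset E) : V → V → Prop :=
  Relation.ReflTransGen (G.stepAvoid F)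

/-- `C` is an `(s,t)`-cut: after deleting the edges of `C` there is no directed
path from `s` to `t`. -/
def IsCut (G : Digraph' V E) (s t : V) (C : Finset E) : Prop :=
  ¬ G.ReachAvoid C s t

/-- An `(s,t)`-min-cut: an `(s,t)`-cut of minimum cardinality. -/
def IsMinCut (G : Digraph' V E) (s t : V) (C : Finset E) : Prop :=
  G.IsCut s t C ∧ ∀ C' : Finset E, G.IsCut s t C' → C.card ≤ C'.card

/-- A minimal `(s,t)`-cut: no proper subset of it is an `(s,t)`-cut. -/
def IsMinimalCut (G : Digraph' V E) (s t : V) (C : Finset E) : Prop :=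
  G.IsCut s t C ∧ ∀ C' : Finset E, C' ⊂ C → ¬ G.IsCut s t C'

/-- An edge is critical if it belongs to some `(s,t)`-min-cut. -/
def Critical (G : Digraph' V E) (s t : V) (e : E) : Prop :=
  ∃ C : Finset E, G.IsMinCut s t C ∧ e ∈ C

/-- `m` is the maximum `(s,t)`-flow value of `G − F`, i.e. the largest value of an
`(s,t)`-flow of `G` vanishing on every edge of `F`. -/
def IsMaxFlowValue (G : Digraph' V E) (s t : V) (F : Finset E) (m : ℤ) : Prop :=
  (∃ f, G.IsFlow s t f ∧ (∀ e ∈ F, f e = 0) ∧ G.flowValue s f = m) ∧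
    ∀ f, G.IsFlow s t f → (∀ e ∈ F, f e = 0) → G.flowValue s f ≤ m

/-- The residual graph `G_f` of a `{0,1}`-flow `f`: each edge with `f e = 1`
is reversed, each edge with `f e = 0` is kept as is. -/
def residual (G : Digraph' V E) (f : E → ℕ) : Digraph' V E where
  src e := if f e = 1 then G.tgt e else G.src e
  tgt e := if f e = 1 then G.src e else G.tgt e

end Digraph'

/-!
If `G_f` has a path from `src e` back to `tgt e` avoiding `e^rev`, augmenting `f` around the
cycle it closes with `e^rev` empties `e` and keeps the value. Conversely, if `g` is a flow of
the same value with `g e = 0`, the edges where `f` and `g` differ form a circulation in `G_f`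
through `e^rev`. Without `e^rev` it carries one unit from `src e` to `tgt e`, and a set of
vertices closed under its edges has nonnegative net inflow, so the vertices it reaches from
`src e` include `tgt e`.

Without such a path, remove the unit on `e`. The excess this leaves at `src e` and the
deficit at `tgt e` are cancelled by removing the flow on a flow path from `s` to `src e` and
on one from `tgt e` to `t`. Following flow edges backwards from `src e`, resp. from `t`, finds
these paths, since the set of vertices so reached has no net inflow. The result is a flow of
value `λ - 1` avoiding `e`, and by the first part no flow avoiding `e` has value `λ`.
-/

namespace Digraph'

section Net

variable {V E : Type} [DecidableEq V] [Fintype E]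

def net (G : Digraph' V E) (w : E → ℤ) (v : V) : ℤ :=
  ∑ e with G.tgt e = v, w e - ∑ e with G.src e = v, w e

lemma net_apply_eq_sum (G : Digraph' V E) (w : E → ℤ) (v : V) :
    G.net w v = ∑ e, ((if G.tgt e = v then w e else 0) - if G.src e = v then w e else 0) := by
  rw [net, sum_filter, sum_filter, sum_sub_distrib]

lemma net_add (G : Digraph' V E) (w₁ w₂ : E → ℤ) :
    G.net (w₁ + w₂) = G.net w₁ + G.net w₂ := by
  ext v
  simp only [net, Pi.add_apply, sum_add_distrib]
  ring

lemma net_neg (G : Digraph' V E) (w : E → ℤ) : G.net (-w) = -G.net w := by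
  ext v
  simp only [net, Pi.neg_apply, sum_neg_distrib]
  ring

lemma net_sub (G : Digraph' V E) (w₁ w₂ : E → ℤ) :
    G.net (w₁ - w₂) = G.net w₁ - G.net w₂ := by
  rw [sub_eq_add_neg, net_add, net_neg, sub_eq_add_neg]

lemma net_pi_single [DecidableEq E] (G : Digraph' V E) (e : E) :
    G.net (Pi.single e 1) = Pi.single (G.tgt e) 1 - Pi.single (G.src e) 1 := by
  ext v
  simp [net, Pi.single_apply, eq_comm]

lemma net_residual (G : Digraph' V E) (f : E → ℕ) (w : E → ℤ) :
    (G.residual f).net w = G.net (fun e => if f e = 1 then -w e else w e) := by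
  ext v
  simp only [net_apply_eq_sum]
  refine sum_congr rfl fun e _ => ?_
  simp only [residual]
  split_ifs <;> simp_all

lemma sum_net_eq (G : Digraph' V E) (w : E → ℤ) (R : Finset V) :
    ∑ v ∈ R, G.net w v =
      ∑ e, ((if G.tgt e ∈ R then w e else 0) - if G.src e ∈ R then w e else 0) := by
  simp only [net_apply_eq_sum]
  rw [sum_comm]
  simp only [sum_sub_distrib, sum_ite_eq]

lemma sum_net_univ [Fintype V] (G : Digraph' V E) (w : E → ℤ) : ∑ v, G.net w v = 0 := by
  simp [sum_net_eq]

lemma sum_net_nonneg_of_closed (G : Digraph' V E) {w : E → ℤ} (hw : ∀ e, 0 ≤ w e)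
    {R : Finset V} (hR : ∀ e, w e ≠ 0 → G.src e ∈ R → G.tgt e ∈ R) :
    0 ≤ ∑ v ∈ R, G.net w v := by
  rw [sum_net_eq]
  refine sum_nonneg fun e _ => ?_
  by_cases hwe : w e = 0
  · simp [hwe]
  · by_cases hsrc : G.src e ∈ R
    · simp [hsrc, hR e hwe]
    · simp only [hsrc, if_false, sub_zero]
      split_ifs <;> simp [hw e]

end Net

section Flow

variable {V E : Type} [DecidableEq V] [Fintype E]

lemma flowValue_eq_neg_net (G : Digraph' V E) (s : V) (f : E → ℕ) :
    G.flowValue s f = -G.net (Nat.cast ∘ f) s := by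
  simp [flowValue, net]

lemma conserves_iff (G : Digraph' V E) (s t : V) (f : E → ℕ) :
    G.Conserves s t f ↔ ∀ v, v ≠ s → v ≠ t → G.net (Nat.cast ∘ f) v = 0 := by
  simp only [Conserves, net, Function.comp_apply, sub_eq_zero]
  exact_mod_cast Iff.rfl

lemma net_eq_of_isFlow [Fintype V] (G : Digraph' V E) {s t : V} (hst : s ≠ t) {f : E → ℕ}
    (hf : G.IsFlow s t f) :
    G.net (Nat.cast ∘ f) = Pi.single t (G.flowValue s f) - Pi.single s (G.flowValue s f) := by
  have hcons := (G.conserves_iff s t f).1 hf.2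
  have hsum : G.net (Nat.cast ∘ f) s + G.net (Nat.cast ∘ f) t = 0 := by
    rw [← Fintype.sum_eq_add s t hst fun v hv => hcons v hv.1 hv.2, sum_net_univ]
  ext v
  rw [flowValue_eq_neg_net]
  by_cases hvs : v = s
  · simp [hvs, hst]
  by_cases hvt : v = t
  · simp [hvt, Ne.symm hst]
    linarith
  simp [hvs, hvt, hcons v hvs hvt]

lemma isFlow_of_net_eq (G : Digraph' V E) {s t : V} (hst : s ≠ t) {f : E → ℕ}
    (hf : ∀ e, f e ≤ 1) {x : ℤ}
    (hnet : G.net (Nat.cast ∘ f) = Pi.single t x - Pi.single s x) :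
    G.IsFlow s t f ∧ G.flowValue s f = x := by
  refine ⟨⟨hf, (G.conserves_iff s t f).2 fun v hvs hvt => ?_⟩, ?_⟩
  · simp [hnet, hvs, hvt]
  · simp [flowValue_eq_neg_net, hnet, hst]

end Flow

section Reach

variable {V E : Type}

lemma reachAvoid_mono (G : Digraph' V E) {F F' : Finset E} (hFF' : F ⊆ F') {a b : V}
    (h : G.ReachAvoid F' a b) : G.ReachAvoid F a b :=
  Relation.ReflTransGen.mono
    (fun _ _ ⟨e, heF', hsrc, htgt⟩ => ⟨e, fun heF => heF' (hFF' heF), hsrc, htgt⟩) _ _ h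

lemma reachAvoid_residual_congr (G : Digraph' V E) {F : Finset E} {f g : E → ℕ}
    (hfg : ∀ e ∉ F, f e = g e) {a b : V} (h : (G.residual f).ReachAvoid F a b) :
    (G.residual g).ReachAvoid F a b :=
  Relation.ReflTransGen.mono (fun _ _ ⟨e, heF, hsrc, htgt⟩ =>
    ⟨e, heF, by simpa [residual, hfg e heF] using hsrc,
      by simpa [residual, hfg e heF] using htgt⟩) _ _ h

/-- Either the path avoids `e`, or its part after the last use of `e` does. -/
lemma reachAvoid_insert_or [DecidableEq E] (G : Digraph' V E) {F : Finset E} (e : E) {a b : V}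
    (h : G.ReachAvoid F a b) :
    G.ReachAvoid (insert e F) a b ∨ G.ReachAvoid (insert e F) (G.tgt e) b := by
  induction h using Relation.ReflTransGen.head_induction_on with
  | refl => exact Or.inl Relation.ReflTransGen.refl
  | head step _ ih =>
    obtain ⟨e', he'F, hsrc, htgt⟩ := step
    by_cases he' : e' = e
    · subst he'
      rw [htgt] at ih ⊢
      exact ih.elim Or.inr Or.inr
    · exact ih.imp_left fun hrest => .head ⟨e', by simp [he', he'F], hsrc, htgt⟩ hrest

variable [Fintype V]

open Classical in
noncomputable def reachSet (G : Digraph' V E) (F : Finset E) (a : V) : Finset V :=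
  {v | G.ReachAvoid F a v}

lemma mem_reachSet {G : Digraph' V E} {F : Finset E} {a v : V} :
    v ∈ G.reachSet F a ↔ G.ReachAvoid F a v := by
  classical
  simp [reachSet]

lemma self_mem_reachSet (G : Digraph' V E) (F : Finset E) (a : V) : a ∈ G.reachSet F a :=
  mem_reachSet.2 Relation.ReflTransGen.refl

variable [DecidableEq V] [Fintype E]

lemma sum_net_reachSet_nonneg (G : Digraph' V E) {F : Finset E} {w : E → ℤ}
    (hw : ∀ e, 0 ≤ w e) (hwF : ∀ e ∈ F, w e = 0) (a : V) :
    0 ≤ ∑ v ∈ G.reachSet F a, G.net w v :=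
  G.sum_net_nonneg_of_closed hw fun e hwe hsrc =>
    mem_reachSet.2 ((mem_reachSet.1 hsrc).tail ⟨e, fun heF => hwe (hwF e heF), rfl, rfl⟩)

lemma sum_net_reachSet_support_nonpos (G : Digraph' V E) {p : E → ℕ} (hp : ∀ e, p e ≤ 1)
    (a : V) :
    ∑ v ∈ (G.residual p).reachSet {e | p e = 0} a, G.net (Nat.cast ∘ p) v ≤ 0 := by
  have hres : (G.residual p).net (Nat.cast ∘ p) = -G.net (Nat.cast ∘ p) := by
    rw [net_residual, ← net_neg]
    congr 1
    ext e
    rcases Nat.le_one_iff_eq_zero_or_eq_one.1 (hp e) with h | h <;> simp [h]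
  have hsum := (G.residual p).sum_net_reachSet_nonneg (F := {e | p e = 0}) (w := Nat.cast ∘ p)
    (fun e => by simp) (fun e he => by simpa using he) a
  simpa [hres] using hsum

/-- Following flow edges backwards from an excess at `a` stays inside a set without net
inflow, so it reaches the source `s` unless it meets the deficit at `b`. -/
lemma one_le_and_source_mem_reachSet (G : Digraph' V E) {s t a b : V} {p : E → ℕ}
    (hp : ∀ e, p e ≤ 1) {x : ℤ} (hx : 0 ≤ x)
    (hnet : G.net (Nat.cast ∘ p) =
      Pi.single t x - Pi.single s x + Pi.single a 1 - Pi.single b 1)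
    (hb : b ∉ (G.residual p).reachSet {e | p e = 0} a) :
    1 ≤ x ∧ s ∈ (G.residual p).reachSet {e | p e = 0} a := by
  have hsum := G.sum_net_reachSet_support_nonpos hp a
  set R := (G.residual p).reachSet {e | p e = 0} a
  have ha : a ∈ R := self_mem_reachSet _ _ _
  simp only [hnet, Pi.add_apply, Pi.sub_apply, sum_add_distrib, sum_sub_distrib,
    sum_pi_single', ha, hb, if_true, if_false] at hsum
  have hs : s ∈ R := by
    by_contra hs
    simp only [hs, if_false] at hsum
    split_ifs at hsum <;> omega
  simp only [hs, if_true] at hsum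
  exact ⟨by split_ifs at hsum <;> omega, hs⟩

/-- Following flow edges backwards from the sink stays inside a set without net inflow,
which must therefore contain the deficit at `b`. -/
lemma mem_reachSet_of_deficit (G : Digraph' V E) {s t b : V} {q : E → ℕ}
    (hq : ∀ e, q e ≤ 1) {x : ℤ} (hx : 1 ≤ x)
    (hnet : G.net (Nat.cast ∘ q) =
      Pi.single t x - Pi.single s x + Pi.single s 1 - Pi.single b 1) :
    b ∈ (G.residual q).reachSet {e | q e = 0} t := by
  have hsum := G.sum_net_reachSet_support_nonpos hq t
  set R := (G.residual q).reachSet {e | q e = 0} t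
  have ht : t ∈ R := self_mem_reachSet _ _ _
  simp only [hnet, Pi.add_apply, Pi.sub_apply, sum_add_distrib, sum_sub_distrib,
    sum_pi_single', ht, if_true] at hsum
  by_contra hb
  simp only [hb, if_false] at hsum
  split_ifs at hsum <;> omega

end Reach

section Augment

variable {V E : Type} [DecidableEq E]

/-- Pushes one unit along each residual edge in `P`. -/
def augment (f : E → ℕ) (P : Finset E) : E → ℕ := fun e => if e ∈ P then 1 - f e else f e

lemma augment_le_one {f : E → ℕ} (hf : ∀ e, f e ≤ 1) (P : Finset E) (e : E) :
    augment f P e ≤ 1 := by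
  have := hf e
  unfold augment
  split_ifs <;> omega

lemma augment_of_notMem {f : E → ℕ} {P : Finset E} {e : E} (he : e ∉ P) :
    augment f P e = f e :=
  if_neg he

variable [DecidableEq V] [Fintype E]

lemma net_augment (G : Digraph' V E) {f : E → ℕ} (hf : ∀ e, f e ≤ 1) (P : Finset E) :
    G.net (Nat.cast ∘ augment f P) =
      G.net (Nat.cast ∘ f) + (G.residual f).net fun e => if e ∈ P then 1 else 0 := by
  rw [net_residual, ← net_add]
  congr 1
  ext e
  rcases Nat.le_one_iff_eq_zero_or_eq_one.1 (hf e) with h | h <;>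
    by_cases he : e ∈ P <;> simp [augment, h, he]

lemma net_augment_singleton (G : Digraph' V E) {f : E → ℕ} (hf : ∀ e, f e ≤ 1) {e : E}
    (he : f e = 1) :
    G.net (Nat.cast ∘ augment f {e}) =
      G.net (Nat.cast ∘ f) + Pi.single (G.src e) 1 - Pi.single (G.tgt e) 1 := by
  have hsingle : (fun e' => if e' ∈ ({e} : Finset E) then (1 : ℤ) else 0) = Pi.single e 1 := by
    ext e'
    simp [Pi.single_apply]
  rw [net_augment G hf, hsingle, net_pi_single]
  simp only [residual, he, if_true]
  abel

/-- Induction on the number of usable edges keeps the edges of the path distinct. -/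
lemma exists_net_eq_of_reachAvoid (G : Digraph' V E) {F : Finset E} {a b : V}
    (h : G.ReachAvoid F a b) :
    ∃ P : Finset E, Disjoint P F ∧
      G.net (fun e => if e ∈ P then 1 else 0) = Pi.single b 1 - Pi.single a 1 := by
  induction hn : Fᶜ.card using Nat.strong_induction_on generalizing F a with
  | _ n ih =>
  rcases h.cases_head with rfl | ⟨c, ⟨e, heF, rfl, rfl⟩, hrest⟩
  · exact ⟨∅, disjoint_empty_left F, by ext; simp [net]⟩
  have hrest' : G.ReachAvoid (insert e F) (G.tgt e) b :=
    (G.reachAvoid_insert_or e hrest).elim id id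
  have hcard : (insert e F)ᶜ.card < n := by
    rw [compl_insert, ← hn]
    exact card_erase_lt_of_mem (mem_compl.2 heF)
  obtain ⟨P, hPF, hP⟩ := ih _ hcard hrest' rfl
  have heP : e ∉ P := fun heP => disjoint_left.1 hPF heP (mem_insert_self e F)
  refine ⟨insert e P, disjoint_insert_left.2 ⟨heF, hPF.mono_right (subset_insert e F)⟩, ?_⟩
  have hind : (fun e' => if e' ∈ insert e P then (1 : ℤ) else 0) =
      (fun e' => if e' ∈ P then 1 else 0) + Pi.single e 1 := by
    ext e'
    by_cases he' : e' = e
    · simp [he', heP]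
    · simp [he']
  rw [hind, net_add, hP, net_pi_single]
  abel

lemma exists_augment (G : Digraph' V E) {f : E → ℕ} (hf : ∀ e, f e ≤ 1) {F : Finset E}
    {a b : V} (h : (G.residual f).ReachAvoid F a b) :
    ∃ g : E → ℕ, (∀ e, g e ≤ 1) ∧ (∀ e ∈ F, g e = f e) ∧
      G.net (Nat.cast ∘ g) = G.net (Nat.cast ∘ f) + Pi.single b 1 - Pi.single a 1 := by
  obtain ⟨P, hPF, hP⟩ := (G.residual f).exists_net_eq_of_reachAvoid h
  refine ⟨augment f P, augment_le_one hf P, fun e he => augment_of_notMem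
    (disjoint_right.1 hPF he), ?_⟩
  rw [net_augment G hf, hP]
  abel

end Augment

section MaxFlow

variable {V E : Type} [Fintype V] [DecidableEq V] [Fintype E] [DecidableEq E]

theorem reachAvoid_of_flowValue_eq (G : Digraph' V E) {s t : V} (hst : s ≠ t) {f g : E → ℕ}
    (hf : G.IsFlow s t f) (hg : G.IsFlow s t g) (hval : G.flowValue s g = G.flowValue s f)
    {e : E} (hfe : f e = 1) (hge : g e = 0) :
    (G.residual f).ReachAvoid {e} (G.src e) (G.tgt e) := by
  set F : Finset E := insert e ({e' | f e' = g e'} : Finset E)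
  set w : E → ℤ := fun e' => if e' ∈ F then 0 else 1
  have hweight : (fun e' => if f e' = 1 then -w e' else w e') =
      Nat.cast ∘ g - Nat.cast ∘ f + Pi.single e 1 := by
    ext e'
    by_cases he' : e' = e
    · simp [he', w, F, hfe, hge]
    · rcases Nat.le_one_iff_eq_zero_or_eq_one.1 (hf.1 e') with h | h <;>
        rcases Nat.le_one_iff_eq_zero_or_eq_one.1 (hg.1 e') with h' | h' <;>
        simp [w, F, he', h, h']
  have hnet : (G.residual f).net w = Pi.single (G.tgt e) 1 - Pi.single (G.src e) 1 := by
    rw [net_residual, hweight, net_add, net_sub, G.net_eq_of_isFlow hst hf,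
      G.net_eq_of_isFlow hst hg, hval, net_pi_single]
    abel
  have hsum := (G.residual f).sum_net_reachSet_nonneg (F := F) (w := w)
    (fun e' => by by_cases he' : e' ∈ F <;> simp [w, he']) (fun e' he' => by simp [w, he'])
    (G.src e)
  simp only [hnet, Pi.sub_apply, sum_sub_distrib, sum_pi_single', self_mem_reachSet,
    if_true] at hsum
  have hmem : G.tgt e ∈ (G.residual f).reachSet F (G.src e) := by
    by_contra hnot
    simp [hnot] at hsum
  exact (G.residual f).reachAvoid_mono (singleton_subset_iff.2 (mem_insert_self _ _))
    (mem_reachSet.1 hmem)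

theorem exists_flow_avoiding_of_reachAvoid (G : Digraph' V E) {s t : V} (hst : s ≠ t)
    {f : E → ℕ} (hf : G.IsFlow s t f) {e : E} (hfe : f e = 1)
    (h : (G.residual f).ReachAvoid {e} (G.src e) (G.tgt e)) :
    ∃ g, G.IsFlow s t g ∧ g e = 0 ∧ G.flowValue s g = G.flowValue s f := by
  obtain ⟨g, hg, hgF, hnet⟩ := G.exists_augment hf.1 h
  have hge : g e = 1 := (hgF e (mem_singleton_self e)).trans hfe
  obtain ⟨hflow, hval⟩ := G.isFlow_of_net_eq hst (augment_le_one hg {e}) (x := G.flowValue s f)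
    (by rw [net_augment_singleton G hg hge, hnet, G.net_eq_of_isFlow hst hf]; abel)
  exact ⟨_, hflow, by simp [augment, hge], hval⟩

theorem exists_flow_avoiding_of_not_reachAvoid (G : Digraph' V E) {s t : V} (hst : s ≠ t)
    {f : E → ℕ} (hf : G.IsFlow s t f) {e : E} (hfe : f e = 1) (hpos : 0 ≤ G.flowValue s f)
    (hnreach : ¬ (G.residual f).ReachAvoid {e} (G.src e) (G.tgt e)) :
    ∃ h, G.IsFlow s t h ∧ h e = 0 ∧ G.flowValue s h = G.flowValue s f - 1 := by
  set x := G.flowValue s f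
  set f₁ := augment f {e}
  have hf₁ : ∀ e', f₁ e' ≤ 1 := augment_le_one hf.1 {e}
  have hf₁e : f₁ e = 0 := by simp [f₁, augment, hfe]
  have hnet₁ : G.net (Nat.cast ∘ f₁) =
      Pi.single t x - Pi.single s x + Pi.single (G.src e) 1 - Pi.single (G.tgt e) 1 := by
    rw [net_augment_singleton G hf.1 hfe, G.net_eq_of_isFlow hst hf]
  have htgt : G.tgt e ∉ (G.residual f₁).reachSet {e' | f₁ e' = 0} (G.src e) := fun hmem =>
    hnreach <| G.reachAvoid_residual_congr (f := f₁) (fun _ he' => augment_of_notMem he')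
      ((G.residual f₁).reachAvoid_mono (by simpa using hf₁e) (mem_reachSet.1 hmem))
  obtain ⟨hx, hs⟩ := G.one_le_and_source_mem_reachSet hf₁ hpos hnet₁ htgt
  obtain ⟨f₂, hf₂, hf₂F, hnet₂⟩ := G.exists_augment hf₁ (mem_reachSet.1 hs)
  have hf₂e : f₂ e = 0 := (hf₂F e (by simpa using hf₁e)).trans hf₁e
  have hnet₂' : G.net (Nat.cast ∘ f₂) =
      Pi.single t x - Pi.single s x + Pi.single s 1 - Pi.single (G.tgt e) 1 := by
    rw [hnet₂, hnet₁]
    abel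
  have htgt₂ := G.mem_reachSet_of_deficit hf₂ hx hnet₂'
  obtain ⟨f₃, hf₃, hf₃F, hnet₃⟩ := G.exists_augment hf₂ (mem_reachSet.1 htgt₂)
  obtain ⟨hflow, hval⟩ := G.isFlow_of_net_eq hst hf₃ (x := x - 1) (by
    rw [hnet₃, hnet₂, hnet₁]
    ext v
    simp only [Pi.add_apply, Pi.sub_apply, Pi.single_apply]
    split_ifs <;> ring)
  exact ⟨f₃, hflow, (hf₃F e (by simpa using hf₂e)).trans hf₂e, hval⟩

end MaxFlow

end Digraph'

/-- Let `f` be a maximum `(s,t)`-flow of `G` and `e` an edge with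
`f e = 1`. Then the maximum `(s,t)`-flow value of `G − e` equals `λ` iff the residual
graph `G_f` contains a directed cycle through the reversed edge `e^rev` (i.e. there is
a directed path in `G_f`, avoiding the residual copy of `e`, from the head `G.src e`
of `e^rev` back to its tail `G.tgt e`); otherwise it equals `λ − 1`. -/
theorem stmt11 {V E : Type} [Fintype V] [DecidableEq V] [Fintype E] [DecidableEq E]
    (G : Digraph' V E) (s t : V) (hst : s ≠ t)
    (lam : ℕ) (hmax : G.IsMaxFlowValue s t ∅ lam)
    (f : E → ℕ) (hf : G.IsFlow s t f) (hval : G.flowValue s f = lam)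
    (e : E) (he : f e = 1) :
    (G.IsMaxFlowValue s t {e} lam ↔
      (G.residual f).ReachAvoid {e} (G.src e) (G.tgt e)) ∧
    (¬ (G.residual f).ReachAvoid {e} (G.src e) (G.tgt e) →
      G.IsMaxFlowValue s t {e} ((lam : ℤ) - 1)) := by
  have hle : ∀ g, G.IsFlow s t g → G.flowValue s g ≤ lam := fun g hg => hmax.2 g hg (by simp)
  have hreach_of_eq : ∀ g, G.IsFlow s t g → g e = 0 → G.flowValue s g = lam →
      (G.residual f).ReachAvoid {e} (G.src e) (G.tgt e) := fun g hg hge hgval =>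
    G.reachAvoid_of_flowValue_eq hst hf hg (hgval.trans hval.symm) he hge
  refine ⟨⟨fun ⟨⟨g, hg, hge, hgval⟩, _⟩ => hreach_of_eq g hg (by simpa using hge) hgval,
    fun hreach => ?_⟩, fun hnreach => ?_⟩
  · obtain ⟨g, hg, hge, hgval⟩ := G.exists_flow_avoiding_of_reachAvoid hst hf he hreach
    exact ⟨⟨g, hg, by simpa using hge, hgval.trans hval⟩, fun g' hg' _ => hle g' hg'⟩
  · obtain ⟨h, hh, hhe, hhval⟩ :=
      G.exists_flow_avoiding_of_not_reachAvoid hst hf he (by simp [hval]) hnreach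
    refine ⟨⟨h, hh, by simpa using hhe, by rw [hhval, hval]⟩, fun g hg hge => ?_⟩
    have hne : G.flowValue s g ≠ lam := fun hgval =>
      hnreach (hreach_of_eq g hg (by simpa using hge) hgval)
    have := hle g hg
    omega
end

section
/- A circulation of the instance (V, E, d, ℓ, μ) exists if and only if Σ_{v ∈ V} d(v) = 0 and, for every partition (A, B) of V, d(B) + ℓ(B, A) ≤ μ(A, B). -/
open Finset

namespace Stmt17Aux

variable {V E : Type} [Fintype V] [DecidableEq V] [Fintype E] [DecidableEq E]

lemma fiber_sum (t : E → V) (g : E → ℝ) (S : Finset V) :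
    ∑ v ∈ S, ∑ e ∈ univ.filter (fun e => t e = v), g e
      = ∑ e ∈ univ.filter (fun e => t e ∈ S), g e :=
  Finset.sum_fiberwise_eq_sum_filter univ S t g

lemma split_filter (s : E → V) (t : E → V) (g : E → ℝ) (A : Finset V) :
    ∑ e ∈ univ.filter (fun e => t e ∈ A), g e
      = (∑ e ∈ univ.filter (fun e => s e ∈ A ∧ t e ∈ A), g e)
        + ∑ e ∈ univ.filter (fun e => s e ∈ Aᶜ ∧ t e ∈ A), g e := by
  classical
  rw [← Finset.sum_filter_add_sum_filter_not (univ.filter (fun e => t e ∈ A))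
    (fun e => s e ∈ A), Finset.filter_filter, Finset.filter_filter]
  congr 1
  all_goals
    apply Finset.sum_congr _ (fun _ _ => rfl)
    apply Finset.filter_congr; intro e he; simp [and_comm, Finset.mem_compl]

lemma split_filter' (s : E → V) (t : E → V) (g : E → ℝ) (A : Finset V) :
    ∑ e ∈ univ.filter (fun e => s e ∈ A), g e
      = (∑ e ∈ univ.filter (fun e => s e ∈ A ∧ t e ∈ A), g e)
        + ∑ e ∈ univ.filter (fun e => s e ∈ A ∧ t e ∈ Aᶜ), g e := by
  classical
  rw [← Finset.sum_filter_add_sum_filter_not (univ.filter (fun e => s e ∈ A))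
    (fun e => t e ∈ A), Finset.filter_filter, Finset.filter_filter]
  congr 1
  all_goals
    apply Finset.sum_congr _ (fun _ _ => rfl)
    apply Finset.filter_congr; intro e he; simp [and_comm, Finset.mem_compl]

lemma boundary (f : E → ℝ) (s t : E → V) (A : Finset V) :
    ∑ v ∈ A, ((∑ e ∈ univ.filter (fun e => t e = v), f e)
        - (∑ e ∈ univ.filter (fun e => s e = v), f e))
      = (∑ e ∈ univ.filter (fun e => s e ∈ Aᶜ ∧ t e ∈ A), f e)
        - ∑ e ∈ univ.filter (fun e => s e ∈ A ∧ t e ∈ Aᶜ), f e := by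
  rw [Finset.sum_sub_distrib, fiber_sum t f A, fiber_sum s f A,
    split_filter s t f A, split_filter' s t f A]
  ring

/-- Excess of a pseudoflow at a vertex. -/
noncomputable def exc (s t : E → V) (d : V → ℝ) (f : E → ℝ) (v : V) : ℝ :=
  (∑ e ∈ univ.filter (fun e => t e = v), f e)
    - (∑ e ∈ univ.filter (fun e => s e = v), f e) - d v

/-- Residual step relation. -/
def Step (s t : E → V) (ℓ μ f : E → ℝ) (a b : V) : Prop :=
  ∃ e, (s e = a ∧ t e = b ∧ f e < μ e) ∨ (s e = b ∧ t e = a ∧ ℓ e < f e)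

noncomputable def Phi (s t : E → V) (d : V → ℝ) (f : E → ℝ) : ℝ :=
  ∑ v, max (exc s t d f v) 0

lemma indic_sum (p : E → Prop) [DecidablePred p] (e0 : E) :
    ∑ e ∈ univ.filter p, (if e = e0 then (1:ℝ) else 0)
      = if p e0 then 1 else 0 := by
  rw [Finset.sum_ite_eq' (univ.filter p) e0 (fun _ => (1:ℝ))]
  simp

lemma exists_push (s t : E → V) (ℓ μ f : E → ℝ) {v u : V}
    (h : Relation.ReflTransGen (Step s t ℓ μ f) v u) :
    ∃ δ : E → ℝ, (∀ e, 0 < δ e → f e < μ e) ∧ (∀ e, δ e < 0 → ℓ e < f e) ∧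
      ∀ w : V, (∑ e ∈ univ.filter (fun e => t e = w), δ e)
          - (∑ e ∈ univ.filter (fun e => s e = w), δ e)
        = (if u = w then 1 else 0) - (if v = w then 1 else 0) := by
  classical
  induction h with
  | refl => exact ⟨0, by simp, by simp, by simp⟩
  | @tail b c hab hbc ih =>
    obtain ⟨δ, h1, h2, h3⟩ := ih
    obtain ⟨e0, he0⟩ := hbc
    rcases he0 with ⟨hs, ht, hcap⟩ | ⟨hs, ht, hcap⟩
    · refine ⟨fun e => δ e + (if e = e0 then 1 else 0), ?_, ?_, ?_⟩
      · intro e he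
        by_cases hee : e = e0
        · subst hee; exact hcap
        · simp only [hee, if_false, add_zero] at he; exact h1 e he
      · intro e he
        by_cases hee : e = e0
        · subst hee; simp at he; exact h2 e (by linarith)
        · simp only [hee, if_false, add_zero] at he; exact h2 e he
      · intro w
        rw [Finset.sum_add_distrib, Finset.sum_add_distrib, indic_sum, indic_sum,
          hs, ht]
        have := h3 w
        by_cases hbw : b = w <;> by_cases hcw : c = w <;>
          simp only [hbw, hcw, if_true, if_false] at * <;> linarith
    · refine ⟨fun e => δ e + (if e = e0 then -1 else 0), ?_, ?_, ?_⟩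
      · intro e he
        by_cases hee : e = e0
        · subst hee; simp at he; exact h1 e (by linarith)
        · simp only [hee, if_false, add_zero] at he; exact h1 e he
      · intro e he
        by_cases hee : e = e0
        · subst hee; exact hcap
        · simp only [hee, if_false, add_zero] at he; exact h2 e he
      · intro w
        have i1 : ∑ e ∈ univ.filter (fun e => t e = w), (if e = e0 then (-1:ℝ) else 0)
            = -(if t e0 = w then 1 else 0) := by
          rw [Finset.sum_ite_eq' (univ.filter (fun e => t e = w)) e0 (fun _ => (-1:ℝ))]
          simp; split <;> simp
        have i2 : ∑ e ∈ univ.filter (fun e => s e = w), (if e = e0 then (-1:ℝ) else 0)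
            = -(if s e0 = w then 1 else 0) := by
          rw [Finset.sum_ite_eq' (univ.filter (fun e => s e = w)) e0 (fun _ => (-1:ℝ))]
          simp; split <;> simp
        rw [Finset.sum_add_distrib, Finset.sum_add_distrib, i1, i2, hs, ht]
        have := h3 w
        by_cases hbw : b = w <;> by_cases hcw : c = w <;>
          simp only [hbw, hcw, if_true, if_false] at * <;> linarith

end Stmt17Aux

namespace Stmt17Aux

variable {V E : Type} [Fintype V] [DecidableEq V] [Fintype E] [DecidableEq E]

lemma exc_shift (s t : E → V) (d : V → ℝ) (f δ : E → ℝ) (ε : ℝ) (w : V) :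
    exc s t d (fun e => f e + ε * δ e) w
      = exc s t d f w
        + ε * ((∑ e ∈ univ.filter (fun e => t e = w), δ e)
            - (∑ e ∈ univ.filter (fun e => s e = w), δ e)) := by
  simp only [exc, Finset.sum_add_distrib, ← Finset.mul_sum]
  ring

lemma augment (s t : E → V) (d : V → ℝ) (ℓ μ f : E → ℝ)
    (hf : ∀ e, ℓ e ≤ f e ∧ f e ≤ μ e) {v u : V}
    (h : Relation.ReflTransGen (Step s t ℓ μ f) v u)
    (hv : 0 < exc s t d f v) (hu : exc s t d f u < 0) :
    ∃ g : E → ℝ, (∀ e, ℓ e ≤ g e ∧ g e ≤ μ e) ∧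
      Phi s t d g < Phi s t d f := by
  classical
  obtain ⟨δ, h1, h2, h3⟩ := exists_push s t ℓ μ f h
  have hvu : v ≠ u := by rintro rfl; linarith
  set bound : E → ℝ := fun e =>
    if 0 < δ e then (μ e - f e) / δ e
    else if δ e < 0 then (f e - ℓ e) / (-δ e) else 1 with hbound
  set S : Finset ℝ :=
    insert (exc s t d f v) (insert (-exc s t d f u) (univ.image bound)) with hS
  have hSne : S.Nonempty := ⟨_, mem_insert_self _ _⟩
  set ε := S.min' hSne with hε
  have hpos : ∀ x ∈ S, 0 < x := by
    intro x hx
    simp only [hS, mem_insert, mem_image] at hx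
    rcases hx with rfl | rfl | ⟨e, _, rfl⟩
    · exact hv
    · linarith
    · by_cases hp : 0 < δ e
      · simp only [hbound, if_pos hp]
        exact div_pos (by linarith [h1 e hp]) hp
      · by_cases hn : δ e < 0
        · simp only [hbound, if_neg hp, if_pos hn]
          exact div_pos (by linarith [h2 e hn]) (by linarith)
        · simp only [hbound, if_neg hp, if_neg hn]; norm_num
  have hεpos : 0 < ε := hpos _ (S.min'_mem hSne)
  have hεv : ε ≤ exc s t d f v := S.min'_le _ (by simp [hS])
  have hεu : ε ≤ -exc s t d f u := S.min'_le _ (by simp [hS])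
  have hεb : ∀ e, ε ≤ bound e := fun e => S.min'_le _ (by simp [hS])
  refine ⟨fun e => f e + ε * δ e, ?_, ?_⟩
  · intro e
    by_cases hp : 0 < δ e
    · have hb := hεb e
      rw [hbound] at hb; simp only [if_pos hp] at hb
      rw [le_div_iff₀ hp] at hb
      refine ⟨?_, ?_⟩
      · show ℓ e ≤ f e + ε * δ e
        nlinarith [(hf e).1]
      · show f e + ε * δ e ≤ μ e
        nlinarith
    · by_cases hn : δ e < 0
      · have hb := hεb e
        rw [hbound] at hb; simp only [if_neg hp, if_pos hn] at hb
        rw [le_div_iff₀ (by linarith : (0:ℝ) < -δ e)] at hb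
        refine ⟨?_, ?_⟩
        · show ℓ e ≤ f e + ε * δ e
          nlinarith
        · show f e + ε * δ e ≤ μ e
          nlinarith [(hf e).2]
      · have : δ e = 0 := le_antisymm (not_lt.1 hp) (not_lt.1 hn)
        simp [this, (hf e).1, (hf e).2]
  · have hexc : ∀ w, exc s t d (fun e => f e + ε * δ e) w
        = exc s t d f w
          + ε * ((if u = w then 1 else 0) - (if v = w then 1 else 0)) := by
      intro w; rw [exc_shift, h3 w]
    have key : ∀ w ∈ (univ : Finset V),
        max (exc s t d (fun e => f e + ε * δ e) w) 0 ≤ max (exc s t d f w) 0 := by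
      intro w _
      rw [hexc w]
      rcases eq_or_ne u w with rfl | hwu
      · rw [if_pos rfl, if_neg (by exact fun hh => hvu hh)]
        have : exc s t d f u + ε * (1 - 0) ≤ 0 := by linarith
        exact max_le (by linarith [le_max_right (exc s t d f u) (0:ℝ)])
          (le_max_right _ _)
      · rcases eq_or_ne v w with rfl | hwv
        · rw [if_neg hwu, if_pos rfl]
          exact max_le_max (by linarith) le_rfl
        · rw [if_neg hwu, if_neg hwv]
          simp
    have keyv : max (exc s t d (fun e => f e + ε * δ e) v) 0
        < max (exc s t d f v) 0 := by
      rw [hexc v, if_neg (fun hh => hvu hh.symm), if_pos rfl]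
      rw [max_eq_left (le_of_lt hv)]
      exact max_lt (by linarith) hv
    exact Finset.sum_lt_sum key ⟨v, mem_univ v, keyv⟩

lemma total_exc (s t : E → V) (d : V → ℝ) (f : E → ℝ) :
    ∑ v, exc s t d f v = ∑ e, f e - ∑ e, f e - ∑ v, d v := by
  simp only [exc]
  rw [Finset.sum_sub_distrib, Finset.sum_sub_distrib, fiber_sum, fiber_sum]
  simp

end Stmt17Aux

open Stmt17Aux

/-- Given an instance `(V, E, d, ℓ, μ)` of the circulation problem
with lower bounds (`0 ≤ ℓ ≤ μ`), a circulation — a function `f : E → ℝ` with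
`ℓ e ≤ f e ≤ μ e` for every edge and, at every vertex `v`, inflow minus outflow equal
to `d v` — exists iff `Σ_{v ∈ V} d v = 0` and, for every partition `(A, B = Aᶜ)` of
`V`, `d(B) + ℓ(B, A) ≤ μ(A, B)`. -/
theorem stmt17 {V E : Type} [Fintype V] [DecidableEq V] [Fintype E]
    (G : Digraph' V E) (d : V → ℝ) (ℓ μ : E → ℝ)
    (hl : ∀ e, 0 ≤ ℓ e) (hlm : ∀ e, ℓ e ≤ μ e) :
    (∃ f : E → ℝ, (∀ e, ℓ e ≤ f e ∧ f e ≤ μ e) ∧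
      ∀ v : V,
        (∑ e ∈ univ.filter (fun e => G.tgt e = v), f e) -
          (∑ e ∈ univ.filter (fun e => G.src e = v), f e) = d v) ↔
    ((∑ v : V, d v) = 0 ∧
      ∀ A : Finset V,
        (∑ v ∈ Aᶜ, d v) +
            (∑ e ∈ univ.filter (fun e => G.src e ∈ Aᶜ ∧ G.tgt e ∈ A), ℓ e) ≤
          ∑ e ∈ univ.filter (fun e => G.src e ∈ A ∧ G.tgt e ∈ Aᶜ), μ e) := by
  classical
  set s := G.src with hs
  set t := G.tgt with ht
  constructor
  · rintro ⟨f, hfb, hflow⟩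
    have hsum0 : ∑ v : V, d v = 0 := by
      have : ∑ v : V, d v
          = ∑ v : V, ((∑ e ∈ univ.filter (fun e => t e = v), f e)
              - ∑ e ∈ univ.filter (fun e => s e = v), f e) :=
        Finset.sum_congr rfl (fun v _ => (hflow v).symm)
      rw [this, Finset.sum_sub_distrib, fiber_sum, fiber_sum]
      simp
    refine ⟨hsum0, fun A => ?_⟩
    have hb : ∑ v ∈ Aᶜ, d v
        = (∑ e ∈ univ.filter (fun e => s e ∈ A ∧ t e ∈ Aᶜ), f e)
          - ∑ e ∈ univ.filter (fun e => s e ∈ Aᶜ ∧ t e ∈ A), f e := by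
      have : ∑ v ∈ Aᶜ, d v
          = ∑ v ∈ Aᶜ, ((∑ e ∈ univ.filter (fun e => t e = v), f e)
              - ∑ e ∈ univ.filter (fun e => s e = v), f e) :=
        Finset.sum_congr rfl (fun v _ => (hflow v).symm)
      rw [this, boundary f s t Aᶜ]
      simp only [compl_compl]
    have hl1 : ∑ e ∈ univ.filter (fun e => s e ∈ Aᶜ ∧ t e ∈ A), ℓ e
        ≤ ∑ e ∈ univ.filter (fun e => s e ∈ Aᶜ ∧ t e ∈ A), f e :=
      Finset.sum_le_sum (fun e _ => (hfb e).1)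
    have hu1 : ∑ e ∈ univ.filter (fun e => s e ∈ A ∧ t e ∈ Aᶜ), f e
        ≤ ∑ e ∈ univ.filter (fun e => s e ∈ A ∧ t e ∈ Aᶜ), μ e :=
      Finset.sum_le_sum (fun e _ => (hfb e).2)
    linarith
  · rintro ⟨hd, hcut⟩
    -- minimize Phi over the compact box
    have hK : IsCompact (Set.Icc ℓ μ) := isCompact_Icc
    have hne : (Set.Icc ℓ μ).Nonempty := ⟨ℓ, le_rfl, fun e => hlm e⟩
    have hcont : Continuous (Phi s t d) := by
      apply continuous_finset_sum
      intro v _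
      apply Continuous.max _ continuous_const
      apply Continuous.sub (Continuous.sub _ _) continuous_const
      · exact continuous_finset_sum _ (fun e _ => continuous_apply e)
      · exact continuous_finset_sum _ (fun e _ => continuous_apply e)
    obtain ⟨f, hfK, hmin⟩ := hK.exists_isMinOn hne hcont.continuousOn
    have hfb : ∀ e, ℓ e ≤ f e ∧ f e ≤ μ e := fun e => ⟨hfK.1 e, hfK.2 e⟩
    have htotal : ∑ v, exc s t d f v = 0 := by
      rw [total_exc, hd]; ring
    -- every vertex has nonpositive excess
    have hnonpos : ∀ v, exc s t d f v ≤ 0 := by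
      intro v
      by_contra hvpos
      push_neg at hvpos
      set A : Finset V :=
        univ.filter (fun w => Relation.ReflTransGen (Step s t ℓ μ f) v w) with hA
      have hvA : v ∈ A := by
        rw [hA, mem_filter]; exact ⟨mem_univ v, Relation.ReflTransGen.refl⟩
      -- all vertices in A have nonnegative excess
      have hAnn : ∀ w ∈ A, 0 ≤ exc s t d f w := by
        intro w hw
        by_contra hwneg
        push_neg at hwneg
        obtain ⟨g, hgb, hglt⟩ := augment s t d ℓ μ f hfb
          (by simpa [hA] using hw) hvpos hwneg
        exact absurd (hmin ⟨fun e => (hgb e).1, fun e => (hgb e).2⟩)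
          (by simpa using not_le.2 hglt)
      -- cut edges are saturated
      have hsat1 : ∀ e ∈ univ.filter (fun e => s e ∈ A ∧ t e ∈ Aᶜ), f e = μ e := by
        intro e he
        simp only [mem_filter, Finset.mem_compl, hA, mem_univ, true_and] at he
        rcases lt_or_eq_of_le (hfb e).2 with hlt | heq
        · exact absurd (he.1.tail ⟨e, Or.inl ⟨rfl, rfl, hlt⟩⟩) he.2
        · exact heq
      have hsat2 : ∀ e ∈ univ.filter (fun e => s e ∈ Aᶜ ∧ t e ∈ A), f e = ℓ e := by
        intro e he
        simp only [mem_filter, Finset.mem_compl, hA, mem_univ, true_and] at he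
        rcases lt_or_eq_of_le (hfb e).1 with hlt | heq
        · exact absurd (he.2.tail ⟨e, Or.inr ⟨rfl, rfl, hlt⟩⟩) he.1
        · exact heq.symm
      -- sum of excess over A
      have hsumA : ∑ w ∈ A, exc s t d f w
          = (∑ e ∈ univ.filter (fun e => s e ∈ Aᶜ ∧ t e ∈ A), ℓ e)
            - (∑ e ∈ univ.filter (fun e => s e ∈ A ∧ t e ∈ Aᶜ), μ e)
            - ∑ w ∈ A, d w := by
        simp only [exc]
        rw [Finset.sum_sub_distrib, boundary f s t A,
          Finset.sum_congr rfl hsat2, Finset.sum_congr rfl hsat1]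
      have hdA : ∑ w ∈ A, d w = -∑ w ∈ Aᶜ, d w := by
        have := Finset.sum_add_sum_compl A d
        rw [hd] at this; linarith
      have hle : ∑ w ∈ A, exc s t d f w ≤ 0 := by
        have := hcut A
        rw [hsumA, hdA]; linarith
      have hgt : 0 < ∑ w ∈ A, exc s t d f w :=
        Finset.sum_pos' hAnn ⟨v, hvA, hvpos⟩
      linarith
    -- hence all excesses vanish
    have hzero : ∀ v, exc s t d f v = 0 := by
      have h' := Finset.sum_eq_zero_iff_of_nonneg
        (s := (univ : Finset V)) (f := fun v => -exc s t d f v)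
        (fun v _ => neg_nonneg.2 (hnonpos v))
      have : ∑ v : V, -exc s t d f v = 0 := by
        rw [Finset.sum_neg_distrib, htotal]; ring
      intro v
      have h2 := h'.1 this v (mem_univ v)
      simp only [neg_eq_zero] at h2
      exact h2
    refine ⟨f, hfb, fun v => ?_⟩
    have := hzero v
    simp only [exc] at this
    linarith
end

section
/- Let λ ≥ 1 and let G be the directed multigraph on the three vertices {s, x, t} consisting of λ parallel edges from s to x and λ + 1 parallel edges from x to t. Then every family B of (s,t)-flows of G with the property that for every edge e of G, B contains a flow f with f(e) = 0 whose value equals the maximum (s,t)-flow value of G − e, has cardinality at least 2λ + 1. -/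
/-!
Deleting an `s → x` edge lowers the maximum flow to `λ - 1`, deleting an `x → t` edge leaves it
at `λ`. A `{0,1}`-flow of value `λ - 1` vanishing on an `s → x` edge is positive on all the other
`s → x` edges, and one of value `λ` vanishing on an `x → t` edge is positive on all the other
`x → t` edges. So the flows that `B` provides for the `2λ + 1` edges are pairwise distinct.
-/

open Finset

/-- The three-vertex graph on `{s, x, t} = {0, 1, 2}` with `λ` parallel edges from
`s` to `x` and `λ+1` parallel edges from `x` to `t`. -/
def threeGraph (lam : ℕ) : Digraph' (Fin 3) (Fin lam ⊕ Fin (lam + 1)) where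
  src e := match e with
    | .inl _ => 0
    | .inr _ => 1
  tgt e := match e with
    | .inl _ => 1
    | .inr _ => 2

theorem Fintype.sum_ite_mem_zero_one_add_card {α : Type*} [Fintype α] [DecidableEq α]
    (s : Finset α) : ∑ k, (if k ∈ s then 0 else 1) + #s = Fintype.card α := by
  simp only [Finset.sum_ite, sum_const_zero, sum_const, smul_eq_mul, mul_one, zero_add]
  rw [Finset.filter_notMem_eq_sdiff, Finset.card_univ_sdiff]
  have := Finset.card_le_univ s
  omega

theorem Fintype.sum_add_card_le_card_of_le_one {α : Type*} [Fintype α] {g : α → ℕ}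
    (hg : ∀ k, g k ≤ 1) {s : Finset α} (hs : ∀ k ∈ s, g k = 0) :
    ∑ k, g k + #s ≤ Fintype.card α := by
  classical
  calc ∑ k, g k + #s ≤ ∑ k, (if k ∈ s then 0 else 1) + #s := by
        gcongr with k
        split_ifs with hk
        exacts [(hs k hk).le, hg k]
    _ = Fintype.card α := sum_ite_mem_zero_one_add_card s

theorem Fintype.eq_of_apply_eq_zero_of_card_le_sum_add_one {α : Type*} [Fintype α]
    {g : α → ℕ} (hg : ∀ k, g k ≤ 1) (hsum : Fintype.card α ≤ ∑ k, g k + 1) {a b : α}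
    (ha : g a = 0) (hb : g b = 0) : a = b := by
  classical
  by_contra hab
  have := sum_add_card_le_card_of_le_one hg (s := {a, b}) (by simp [ha, hb])
  rw [card_pair hab] at this
  omega

theorem Digraph'.IsMaxFlowValue.unique {V E : Type} [DecidableEq V] [Fintype E]
    {G : Digraph' V E} {s t : V} {F : Finset E} {m m' : ℤ}
    (h : G.IsMaxFlowValue s t F m) (h' : G.IsMaxFlowValue s t F m') : m = m' := by
  obtain ⟨⟨f, hf, hfF, rfl⟩, hle⟩ := h
  obtain ⟨⟨f', hf', hfF', rfl⟩, hle'⟩ := h'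
  exact le_antisymm (hle' f hf hfF) (hle f' hf' hfF')

namespace threeGraph

variable {lam : ℕ}

theorem flowValue_eq (f : Fin lam ⊕ Fin (lam + 1) → ℕ) :
    (threeGraph lam).flowValue 0 f = ∑ i, f (.inl i) := by
  rw [Digraph'.flowValue, Finset.sum_filter, Finset.sum_filter, Fintype.sum_sum_type,
    Fintype.sum_sum_type]
  simp [threeGraph]

theorem isFlow_iff (f : Fin lam ⊕ Fin (lam + 1) → ℕ) :
    (threeGraph lam).IsFlow 0 2 f ↔ (∀ e, f e ≤ 1) ∧ ∑ i, f (.inl i) = ∑ j, f (.inr j) := by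
  refine and_congr_right fun _ => ?_
  have hv : ∀ v : Fin 3, v ≠ 0 → v ≠ 2 → v = 1 := by decide
  simp only [Digraph'.Conserves, Finset.sum_filter, Fintype.sum_sum_type]
  constructor
  · intro h
    simpa [threeGraph] using h 1 (by decide) (by decide)
  · intro h v hv0 hv2
    obtain rfl := hv v hv0 hv2
    simpa [threeGraph] using h

def complIndicator (S : Finset (Fin lam)) (T : Finset (Fin (lam + 1))) :
    Fin lam ⊕ Fin (lam + 1) → ℕ :=
  Sum.elim (fun i => if i ∈ S then 0 else 1) (fun j => if j ∈ T then 0 else 1)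

theorem isFlow_complIndicator {S : Finset (Fin lam)} {T : Finset (Fin (lam + 1))}
    (hST : #S + 1 = #T) : (threeGraph lam).IsFlow 0 2 (complIndicator S T) := by
  refine (isFlow_iff _).2 ⟨fun e => ?_, ?_⟩
  · rcases e with i | j <;> simp only [complIndicator, Sum.elim_inl, Sum.elim_inr] <;> split <;> simp
  · have hS := Fintype.sum_ite_mem_zero_one_add_card S
    have hT := Fintype.sum_ite_mem_zero_one_add_card T
    simp only [Fintype.card_fin] at hS hT
    simp only [complIndicator, Sum.elim_inl, Sum.elim_inr]
    omega

theorem flowValue_complIndicator (S : Finset (Fin lam)) (T : Finset (Fin (lam + 1))) :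
    (threeGraph lam).flowValue 0 (complIndicator S T) = lam - #S := by
  have hS := Fintype.sum_ite_mem_zero_one_add_card S
  simp only [Fintype.card_fin] at hS
  rw [flowValue_eq, eq_sub_iff_add_eq]
  exact_mod_cast hS

theorem flowValue_le_of_apply_inl_eq_zero {f : Fin lam ⊕ Fin (lam + 1) → ℕ}
    (hf : (threeGraph lam).IsFlow 0 2 f) {S : Finset (Fin lam)} (hS : ∀ i ∈ S, f (.inl i) = 0) :
    (threeGraph lam).flowValue 0 f ≤ lam - #S := by
  have := Fintype.sum_add_card_le_card_of_le_one (fun i => hf.1 (.inl i)) hS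
  rw [Fintype.card_fin] at this
  rw [flowValue_eq, le_sub_iff_add_le]
  exact_mod_cast this

theorem isMaxFlowValue_inl (i : Fin lam) :
    (threeGraph lam).IsMaxFlowValue 0 2 {.inl i} (lam - 1) := by
  refine ⟨⟨complIndicator {i} {i.castSucc, Fin.last lam}, ?_, by simp [complIndicator], ?_⟩,
    fun f hf hf0 => ?_⟩
  · exact isFlow_complIndicator (by rw [card_pair (Fin.castSucc_lt_last i).ne]; rfl)
  · simp [flowValue_complIndicator]
  · simpa using flowValue_le_of_apply_inl_eq_zero hf (S := {i}) (by simpa using hf0)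

theorem isMaxFlowValue_inr (j : Fin (lam + 1)) :
    (threeGraph lam).IsMaxFlowValue 0 2 {.inr j} lam := by
  refine ⟨⟨complIndicator ∅ {j}, isFlow_complIndicator rfl, by simp [complIndicator], ?_⟩,
    fun f hf _ => ?_⟩
  · simp [flowValue_complIndicator]
  · simpa using flowValue_le_of_apply_inl_eq_zero hf (S := ∅) (by simp)

theorem eq_of_apply_inl_eq_zero {f : Fin lam ⊕ Fin (lam + 1) → ℕ}
    (hf : (threeGraph lam).IsFlow 0 2 f) (hval : (threeGraph lam).flowValue 0 f = lam - 1)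
    {i i' : Fin lam} (hi : f (.inl i) = 0) (hi' : f (.inl i') = 0) : i = i' := by
  refine Fintype.eq_of_apply_eq_zero_of_card_le_sum_add_one (g := fun k => f (.inl k))
    (fun k => hf.1 _) ?_ hi hi'
  rw [flowValue_eq] at hval
  rw [Fintype.card_fin]
  omega

theorem eq_of_apply_inr_eq_zero {f : Fin lam ⊕ Fin (lam + 1) → ℕ}
    (hf : (threeGraph lam).IsFlow 0 2 f) (hval : (threeGraph lam).flowValue 0 f = lam)
    {j j' : Fin (lam + 1)} (hj : f (.inr j) = 0) (hj' : f (.inr j') = 0) : j = j' := by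
  refine Fintype.eq_of_apply_eq_zero_of_card_le_sum_add_one (g := fun k => f (.inr k))
    (fun k => hf.1 _) ?_ hj hj'
  rw [flowValue_eq, ((isFlow_iff f).1 hf).2] at hval
  rw [Fintype.card_fin]
  omega

end threeGraph

theorem stmt18_general (lam : ℕ)
    (B : Finset ((Fin lam ⊕ Fin (lam + 1)) → ℕ))
    (hflow : ∀ f ∈ B, (threeGraph lam).IsFlow 0 2 f)
    (hcover : ∀ e : Fin lam ⊕ Fin (lam + 1), ∃ f ∈ B, f e = 0 ∧
      (threeGraph lam).IsMaxFlowValue 0 2 {e} ((threeGraph lam).flowValue 0 f)) :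
    2 * lam + 1 ≤ B.card := by
  choose F hFB hF0 hFmax using hcover
  have hval_inl (i : Fin lam) : (threeGraph lam).flowValue 0 (F (.inl i)) = lam - 1 :=
    (hFmax _).unique (threeGraph.isMaxFlowValue_inl i)
  have hval_inr (j : Fin (lam + 1)) : (threeGraph lam).flowValue 0 (F (.inr j)) = lam :=
    (hFmax _).unique (threeGraph.isMaxFlowValue_inr j)
  have hinj : Function.Injective F := by
    rintro (i | j) (i' | j') h
    · exact congrArg _ <| threeGraph.eq_of_apply_inl_eq_zero (hflow _ (hFB _)) (hval_inl i)
        (hF0 _) (h ▸ hF0 _)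
    · have := hval_inl i
      rw [h, hval_inr] at this
      omega
    · have := hval_inr j
      rw [h, hval_inl] at this
      omega
    · exact congrArg _ <| threeGraph.eq_of_apply_inr_eq_zero (hflow _ (hFB _)) (hval_inr j)
        (hF0 _) (h ▸ hF0 _)
  calc 2 * lam + 1 = #(univ : Finset (Fin lam ⊕ Fin (lam + 1))) := by simp; omega
    _ ≤ #B := card_le_card_of_injOn F (fun e _ => hFB e) hinj.injOn

/-- Let `λ ≥ 1` and let `G` be the directed multigraph on three
vertices `s, x, t` with `λ` parallel edges from `s` to `x` and `λ+1` parallel edges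
from `x` to `t`. Every family `B` of `(s,t)`-flows of `G` such that for every edge
`e`, `B` contains a flow `f` with `f e = 0` whose value equals the maximum
`(s,t)`-flow value of `G − e`, has cardinality at least `2λ + 1`. -/
theorem stmt18 (lam : ℕ) (hlam : 1 ≤ lam)
    (B : Finset ((Fin lam ⊕ Fin (lam + 1)) → ℕ))
    (hflow : ∀ f ∈ B, (threeGraph lam).IsFlow 0 2 f)
    (hcover : ∀ e : Fin lam ⊕ Fin (lam + 1), ∃ f ∈ B, f e = 0 ∧
      (threeGraph lam).IsMaxFlowValue 0 2 {e} ((threeGraph lam).flowValue 0 f)) :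
    2 * lam + 1 ≤ B.card :=
  stmt18_general lam B hflow hcover
end
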